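/- arXiv:1108.1108 — 8 statements merged into one kernel-verified Lean document; each statement's English description precedes it below -/
import Mathlib

section
/- Let R be an associative unital algebra over a commutative ring K of characteristic 0 (or K ⊇ ℚ), and x, y ∈ R with yx = xy + γ·1 for some γ ∈ K. Then for all natural numbers m, n: y^m · x^n = Σ_{k=0}^{min(m,n)} (m! · n! / (k! · (m-k)! · (n-k)!)) · γ^k · x^{n-k} · y^{m-k}. -/
/-!
Write `T i j = n(n-1)⋯(n-i+1) γ^i • x^(n-i) y^j`. From `y xⁿ = xⁿ y + nγ xⁿ⁻¹` one gets
`y T i j = T i (j+1) + T (i+1) j`, which is Pascal's rule in disguise: hence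
`y^m xⁿ = ∑ C(m,i) T i (m-i)`, exactly as in the binomial theorem. The coefficient
`C(m,k) n!/(n-k)!` equals `m! n!/(k! (m-k)! (n-k)!)` and vanishes for `k > n`.
-/

open Finset

section Weyl

variable {K R : Type*} [CommRing K] [Ring R] [Algebra K R] {γ : K} {x y : R}

theorem weyl_mul_pow (h : y * x = x * y + γ • (1 : R)) (n : ℕ) :
    y * x ^ n = x ^ n * y + ((n : K) * γ) • x ^ (n - 1) := by
  induction n with
  | zero => simp
  | succ n ih =>
    rcases n with _ | n
    · simpa using h
    · rw [pow_succ, ← mul_assoc, ih, add_mul, smul_mul_assoc, mul_assoc, h, mul_add,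
        ← mul_assoc, ← pow_succ, mul_smul_comm, mul_one, Nat.add_sub_cancel, ← pow_succ,
        add_assoc, ← add_smul]
      congr 2
      push_cast
      ring

variable (γ x y) in
def weylTerm (n i j : ℕ) : R :=
  ((n.descFactorial i : K) * γ ^ i) • (x ^ (n - i) * y ^ j)

theorem mul_weylTerm (h : y * x = x * y + γ • (1 : R)) (n i j : ℕ) :
    y * weylTerm γ x y n i j = weylTerm γ x y n i (j + 1) + weylTerm γ x y n (i + 1) j := by
  rw [weylTerm, weylTerm, weylTerm, mul_smul_comm, ← mul_assoc, weyl_mul_pow h, add_mul,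
    mul_assoc, ← pow_succ', smul_mul_assoc, smul_add, smul_smul, Nat.descFactorial_succ,
    Nat.sub_sub]
  congr 2
  push_cast
  ring

theorem pow_mul_pow_eq_sum_weylTerm (h : y * x = x * y + γ • (1 : R)) (m n : ℕ) :
    y ^ m * x ^ n = ∑ i ∈ range (m + 1), m.choose i • weylTerm γ x y n i (m - i) := by
  induction m with
  | zero => simp [weylTerm]
  | succ m ih =>
    rw [sum_choose_succ_nsmul, pow_succ', mul_assoc, ih, mul_sum, ← sum_add_distrib]
    refine sum_congr rfl fun i hi => ?_
    rw [mul_smul_comm, mul_weylTerm h, smul_add, Nat.sub_add_comm (mem_range_succ_iff.mp hi)]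

end Weyl

theorem cast_factorial_mul_factorial_div_eq_choose_mul_descFactorial {m n k : ℕ}
    (hkm : k ≤ m) (hkn : k ≤ n) :
    (m.factorial * n.factorial : ℚ) / (k.factorial * (m - k).factorial * (n - k).factorial) =
      (m.choose k * n.descFactorial k : ℕ) := by
  rw [div_eq_iff (by positivity), ← Nat.choose_mul_factorial_mul_factorial hkm,
    ← Nat.factorial_mul_descFactorial hkn]
  push_cast
  ring

theorem mul_formula_weyl {K : Type*} [CommRing K] [Algebra ℚ K]
    {R : Type*} [Ring R] [Algebra K R]
    (γ : K) (x y : R) (h : y * x = x * y + γ • (1 : R)) (m n : ℕ) :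
    y ^ m * x ^ n =
      ∑ k ∈ Finset.range (min m n + 1),
        ((algebraMap ℚ K ((m.factorial * n.factorial : ℚ) /
            (k.factorial * (m - k).factorial * (n - k).factorial))) * γ ^ k) •
          (x ^ (n - k) * y ^ (m - k)) := by
  rw [pow_mul_pow_eq_sum_weylTerm h,
    ← sum_subset (range_subset_range.mpr (by omega : min m n + 1 ≤ m + 1))]
  · refine sum_congr rfl fun k hk => ?_
    have hk : k ≤ m ∧ k ≤ n := by simpa [Nat.lt_succ_iff] using hk
    rw [cast_factorial_mul_factorial_div_eq_choose_mul_descFactorial hk.1 hk.2, map_natCast,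
      weylTerm, ← Nat.cast_smul_eq_nsmul K, smul_smul, Nat.cast_mul, mul_assoc]
  · intro k hkm hk
    have hnk : n < k := by simp only [mem_range] at hkm hk; omega
    simp [weylTerm, Nat.descFactorial_eq_zero_iff_lt.mpr hnk]
end

section
/- Let R be an associative unital algebra over a commutative ring K, x, y ∈ R with yx = xy + α·x + γ·1 where α ∈ K is invertible and γ ∈ K. Then for all natural numbers m, n: y^m · x^n = α^{-n} · Σ_{i=0}^{n} C(n,i) (-γ)^{n-i} (α·x + γ·1)^i (y + i·α·1)^m. -/
/-!
Put `z = α • x + γ • 1`. The commutation relation says `y * z = z * (y + α • 1)`, so moving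
`z ^ i` to the left past `y ^ m` shifts `y` to `y + (i • α) • 1`. Since
`x = α⁻¹ • (z - γ • 1)` and `z` commutes with scalars, the binomial expansion of
`(z - γ • 1) ^ n` gives the formula.
-/

section
variable {K : Type*} [CommRing K] {R : Type*} [Ring R] [Algebra K R]

theorem add_smul_one_pow (z : R) (c : K) (n : ℕ) :
    (z + c • (1 : R)) ^ n =
      ∑ i ∈ Finset.range (n + 1), ((n.choose i : K) * c ^ (n - i)) • z ^ i := by
  rw [((Commute.one_right z).smul_right c).add_pow]
  refine Finset.sum_congr rfl fun i _ => ?_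
  rw [smul_pow, one_pow, mul_smul_comm, mul_one, smul_mul_assoc, ← Nat.cast_comm, ← nsmul_eq_mul,
    ← Nat.cast_smul_eq_nsmul K, smul_smul, mul_comm]

theorem SemiconjBy.pow_left_add_smul_one {a : K} {y z : R} (h : SemiconjBy z (y + a • 1) y)
    (i : ℕ) : SemiconjBy (z ^ i) (y + (i • a) • 1) y := by
  induction i with
  | zero => rw [pow_zero, zero_smul, zero_smul, add_zero]; exact SemiconjBy.one_left y
  | succ i ih =>
    rw [pow_succ, succ_nsmul, add_smul, add_comm (_ • _) (a • 1), ← add_assoc]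
    exact ih.mul_left (h.add_right ((Commute.one_right z).smul_right (i • a)))

theorem semiconjBy_smul_add_smul_one_of_mul_eq {a γ : K} {x y : R}
    (h : y * x = x * y + a • x + γ • (1 : R)) :
    SemiconjBy (a • x + γ • (1 : R)) (y + a • 1) y := by
  simp only [SemiconjBy, mul_add, add_mul, smul_mul_assoc, mul_smul_comm, h, one_mul, mul_one,
    smul_add, smul_smul]
  abel

end

theorem mul_formula_alpha_gamma {K : Type*} [CommRing K] {R : Type*} [Ring R] [Algebra K R]
    (α : Kˣ) (γ : K) (x y : R)
    (h : y * x = x * y + (α : K) • x + γ • (1 : R)) (m n : ℕ) :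
    y ^ m * x ^ n =
      ((α⁻¹ : Kˣ) : K) ^ n •
        ∑ i ∈ Finset.range (n + 1),
          ((n.choose i : K) * (-γ) ^ (n - i)) •
            (((α : K) • x + γ • (1 : R)) ^ i * (y + (i • (α : K)) • (1 : R)) ^ m) := by
  set z : R := (α : K) • x + γ • (1 : R)
  have hx : x = ((α⁻¹ : Kˣ) : K) • (z + (-γ) • (1 : R)) := by
    rw [neg_smul, add_neg_cancel_right, ← Units.smul_def, ← Units.smul_def, inv_smul_smul]
  have hz : SemiconjBy z (y + (α : K) • 1) y := semiconjBy_smul_add_smul_one_of_mul_eq h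
  rw [hx, smul_pow, mul_smul_comm, add_smul_one_pow, Finset.mul_sum]
  congr 1
  refine Finset.sum_congr rfl fun i _ => ?_
  rw [mul_smul_comm, ((hz.pow_left_add_smul_one i).pow_right m).eq]
end

section
/- Let R be an associative unital algebra over a commutative ring K, x, y ∈ R with yx = xy + β·y + γ·1 where β ∈ K is invertible and γ ∈ K. Then for all natural numbers m, n: y^m · x^n = β^{-m} · Σ_{i=0}^{m} C(m,i) (-γ)^{m-i} (x + i·β·1)^n (β·y + γ·1)^i. -/
/-!
Put `z = β • y + γ • 1`. The relation becomes `z * x = (x + β • 1) * z`, so conjugating past `z`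
shifts `x` by `β`, and hence `z ^ i * x ^ n = (x + (i • β) • 1) ^ n * z ^ i`. Writing
`y = β⁻¹ • (z - γ • 1)` and expanding `(z - γ • 1) ^ m` by the binomial theorem gives the formula.
-/

section ShiftRelation

variable {K R : Type*}

section Semiring

variable [CommSemiring K] [Semiring R] [Algebra K R]

theorem semiconjBy_add_smul_one_of_semiconjBy {z x : R} {b : K}
    (hz : SemiconjBy z x (x + b • 1)) (a : K) :
    SemiconjBy z (x + a • 1) (x + (a + b) • 1) := by
  unfold SemiconjBy at *
  rw [mul_add, hz, mul_smul_comm, mul_one]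
  simp only [add_mul, smul_mul_assoc, one_mul, add_smul]
  abel

theorem semiconjBy_pow_add_nsmul_smul_one {z x : R} {b : K}
    (hz : SemiconjBy z x (x + b • 1)) (i : ℕ) :
    SemiconjBy (z ^ i) x (x + (i • b) • 1) := by
  induction i with
  | zero => simp
  | succ i ih =>
    rw [pow_succ', succ_nsmul]
    exact (semiconjBy_add_smul_one_of_semiconjBy hz (i • b)).mul_left ih

end Semiring

theorem sub_smul_one_pow [CommRing K] [Ring R] [Algebra K R] (z : R) (c : K) (m : ℕ) :
    (z - c • 1) ^ m =
      ∑ i ∈ Finset.range (m + 1), ((m.choose i : K) * (-c) ^ (m - i)) • z ^ i := by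
  have hc : Commute z ((-c) • (1 : R)) := (Commute.one_right z).smul_right (-c)
  rw [sub_eq_add_neg, ← neg_smul, hc.add_pow]
  refine Finset.sum_congr rfl fun i _ => ?_
  rw [smul_pow, one_pow, mul_smul_comm, mul_one, smul_mul_assoc, ← Nat.cast_comm,
    ← nsmul_eq_mul, ← Nat.cast_smul_eq_nsmul K, smul_smul, mul_comm]

end ShiftRelation

theorem mul_formula_beta_gamma {K : Type*} [CommRing K] {R : Type*} [Ring R] [Algebra K R]
    (β : Kˣ) (γ : K) (x y : R)
    (h : y * x = x * y + (β : K) • y + γ • (1 : R)) (m n : ℕ) :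
    y ^ m * x ^ n =
      ((β⁻¹ : Kˣ) : K) ^ m •
        ∑ i ∈ Finset.range (m + 1),
          ((m.choose i : K) * (-γ) ^ (m - i)) •
            ((x + (i • (β : K)) • (1 : R)) ^ n * ((β : K) • y + γ • (1 : R)) ^ i) := by
  set z : R := (β : K) • y + γ • (1 : R)
  have hz : SemiconjBy z x (x + (β : K) • 1) := by
    simp only [SemiconjBy, z, add_mul, smul_mul_assoc, h, smul_add, mul_add, smul_smul,
      one_mul, mul_one, mul_smul_comm]
    rw [mul_comm γ]
    abel
  have hy : y = ((β⁻¹ : Kˣ) : K) • (z - γ • 1) := by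
    rw [add_sub_cancel_right, smul_smul, Units.inv_mul, one_smul]
  rw [hy, smul_pow, smul_mul_assoc, sub_smul_one_pow, Finset.sum_mul]
  congr 1
  refine Finset.sum_congr rfl fun i _ => ?_
  rw [smul_mul_assoc, ((semiconjBy_pow_add_nsmul_smul_one hz i).pow_right n).eq]
end

section
/- Let R be an associative unital algebra over a commutative ring K, q ∈ K, and x, y ∈ R with yx = q·xy. Then for every natural number n: (x+y)^n = Σ_{i=0}^{n} qbinom(n,i) · x^i · y^{n-i}, where qbinom denotes the Gaussian (q-) binomial coefficient. -/
/-!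
Induct on `n`, multiplying by `x + y` on the left. Multiplying `x ^ i * y ^ (n - i)` by `x` just
raises the power of `x`; multiplying it by `y` requires moving `y` past `x ^ i`, which costs a
factor `q ^ i`. After shifting the index of the second sum, the coefficient of
`x ^ (i + 1) * y ^ (n - i)` is `[n, i]_q + q ^ (i + 1) * [n, i + 1]_q`, which is the q-Pascal
recurrence defining `qbinom`.
-/

/-- Gaussian (q-)binomial coefficient, via the q-Pascal recurrence
`[n+1, k+1]_q = [n, k]_q + q^(k+1) * [n, k+1]_q`. -/
def qbinom {K : Type*} [CommRing K] (q : K) : ℕ → ℕ → K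
  | _, 0 => 1
  | 0, _ + 1 => 0
  | n + 1, k + 1 => qbinom q n k + q ^ (k + 1) * qbinom q n (k + 1)

section QBinom

variable {K : Type*} [CommRing K] (q : K)

@[simp]
theorem qbinom_zero_right (n : ℕ) : qbinom q n 0 = 1 := by
  cases n <;> rfl

theorem qbinom_succ_succ (n k : ℕ) :
    qbinom q (n + 1) (k + 1) = qbinom q n k + q ^ (k + 1) * qbinom q n (k + 1) := rfl

theorem qbinom_eq_zero_of_lt : ∀ {n k : ℕ}, n < k → qbinom q n k = 0
  | 0, _ + 1, _ => rfl
  | n + 1, k + 1, h => by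
    rw [qbinom_succ_succ, qbinom_eq_zero_of_lt (by omega), qbinom_eq_zero_of_lt (by omega),
      mul_zero, add_zero]

end QBinom

theorem mul_pow_eq_smul_pow_mul_of_mul_eq_smul {K R : Type*} [Monoid K] [Monoid R]
    [MulAction K R] [IsScalarTower K R R] [SMulCommClass K R R] {q : K} {x y : R}
    (h : y * x = q • (x * y)) (i : ℕ) : y * x ^ i = q ^ i • (x ^ i * y) := by
  induction i with
  | zero => simp
  | succ i ih =>
    rw [pow_succ', ← mul_assoc, h, smul_mul_assoc, mul_assoc, ih, mul_smul_comm, smul_smul,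
      ← pow_succ', ← mul_assoc, ← pow_succ']

section QBinomialSum

variable {K R : Type*} [CommRing K] [Semiring R] [Algebra K R] (q : K) (x y : R)

theorem mul_sum_qbinom_smul_left (n : ℕ) :
    x * ∑ i ∈ Finset.range (n + 1), qbinom q n i • (x ^ i * y ^ (n - i)) =
      ∑ i ∈ Finset.range (n + 1), qbinom q n i • (x ^ (i + 1) * y ^ (n - i)) := by
  simp only [Finset.mul_sum, mul_smul_comm, ← mul_assoc, ← pow_succ']

variable {q x y}

/-- The `i = 0` term of the product becomes `y ^ (n + 1)`; the remaining terms are shifted down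
by one, and the new top term vanishes because `[n, n + 1]_q = 0`. -/
theorem mul_sum_qbinom_smul_right (h : y * x = q • (x * y)) (n : ℕ) :
    y * ∑ i ∈ Finset.range (n + 1), qbinom q n i • (x ^ i * y ^ (n - i)) =
      y ^ (n + 1) + ∑ i ∈ Finset.range (n + 1),
        (q ^ (i + 1) * qbinom q n (i + 1)) • (x ^ (i + 1) * y ^ (n - i)) := by
  have hterm (i : ℕ) : y * (qbinom q n i • (x ^ i * y ^ (n - i))) =
      (q ^ i * qbinom q n i) • (x ^ i * y ^ (n - i + 1)) := by
    rw [mul_smul_comm, ← mul_assoc, mul_pow_eq_smul_pow_mul_of_mul_eq_smul h, smul_mul_assoc,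
      smul_smul, mul_comm, mul_assoc, ← pow_succ']
  rw [Finset.mul_sum, Finset.sum_congr rfl fun i _ => hterm i, Finset.sum_range_succ',
    Finset.sum_range_succ, qbinom_eq_zero_of_lt q (Nat.lt_succ_self n), mul_zero, zero_smul,
    add_zero, add_comm]
  simp only [pow_zero, one_mul, qbinom_zero_right, one_smul, Nat.sub_zero]
  congr 1
  refine Finset.sum_congr rfl fun i hi => ?_
  rw [Nat.sub_add_eq, Nat.sub_add_cancel (by simp at hi; omega)]

end QBinomialSum

theorem q_binomial_theorem {K : Type*} [CommRing K] {R : Type*} [Ring R] [Algebra K R]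
    (q : K) (x y : R) (h : y * x = q • (x * y)) (n : ℕ) :
    (x + y) ^ n = ∑ i ∈ Finset.range (n + 1), qbinom q n i • (x ^ i * y ^ (n - i)) := by
  induction n with
  | zero => simp
  | succ n ih =>
    rw [pow_succ', ih, add_mul, mul_sum_qbinom_smul_left, mul_sum_qbinom_smul_right h,
      Finset.sum_range_succ' _ (n + 1)]
    simp only [qbinom_succ_succ, add_smul, Finset.sum_add_distrib, Nat.succ_sub_succ,
      qbinom_zero_right, one_smul, pow_zero, one_mul, Nat.sub_zero]
    abel
end

section
/- Let R be an associative unital algebra over a commutative ring K, q, α ∈ K, and x, y ∈ R with yx = q·xy + α·x. Then for all natural numbers m, n: y^m · x^n = x^n · (q^n·y + [n]_q·α·1)^m, where [n]_q = 1 + q + ... + q^{n-1}. -/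
/-- The q-integer `[n]_q = 1 + q + ⋯ + q^(n-1)`. -/
def qint {K : Type*} [CommRing K] (q : K) (n : ℕ) : K := ∑ i ∈ Finset.range n, q ^ i

/-!
Write `z_n = q^n y + [n]_q α`. The relation `y x = x (q y + α)` says that conjugating past `x`
turns `y` into the affine expression `q y + α`; iterating, `y x^n = x^n z_n` because
`q z_n + α = z_(n+1)` (this is `[n+1]_q = q [n]_q + 1`). So `x^n` semiconjugates `z_n` to `y`,
hence also `z_n^m` to `y^m`.
-/

theorem qint_succ {K : Type*} [CommRing K] (q : K) (n : ℕ) :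
    qint q (n + 1) = q * qint q n + 1 :=
  geom_sum_succ

section

variable {K R : Type*} [CommRing K] [Semiring R] [Algebra K R] {q α : K} {x y : R}

theorem smul_add_smul_one_succ (n : ℕ) :
    q • (q ^ n • y + (qint q n * α) • (1 : R)) + α • 1 =
      q ^ (n + 1) • y + (qint q (n + 1) * α) • (1 : R) := by
  rw [qint_succ, pow_succ', smul_add, smul_smul, smul_smul, add_assoc, ← add_smul]
  congr 2
  ring

theorem semiconjBy_pow_of_mul_eq (h : y * x = q • (x * y) + α • x) (n : ℕ) :
    SemiconjBy (x ^ n) (q ^ n • y + (qint q n * α) • (1 : R)) y := by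
  induction n with
  | zero => simp [SemiconjBy, qint]
  | succ n ih =>
    unfold SemiconjBy at ih ⊢
    calc x ^ (n + 1) * (q ^ (n + 1) • y + (qint q (n + 1) * α) • (1 : R))
        = x * (q • (x ^ n * (q ^ n • y + (qint q n * α) • (1 : R))) + α • x ^ n) := by
          rw [← smul_add_smul_one_succ, pow_succ', mul_assoc, mul_add, mul_smul_comm,
            mul_smul_comm, mul_one]
      _ = y * x ^ (n + 1) := by
          rw [ih, mul_add, mul_smul_comm, mul_smul_comm, ← mul_assoc, ← smul_mul_assoc q (x * y),
            ← smul_mul_assoc α x, ← add_mul, ← h, mul_assoc, ← pow_succ']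

end

theorem q_mul_formula_alpha {K : Type*} [CommRing K] {R : Type*} [Ring R] [Algebra K R]
    (q α : K) (x y : R) (h : y * x = q • (x * y) + α • x) (m n : ℕ) :
    y ^ m * x ^ n = x ^ n * (q ^ n • y + (qint q n * α) • (1 : R)) ^ m :=
  ((semiconjBy_pow_of_mul_eq h n).pow_right m).eq.symm
end

section
/- Let R be an associative unital algebra over a field K of characteristic 0 (or over ℚ), and x, d ∈ R with dx = xd + 1. Then for every natural number n: (x+d)^n = Σ over pairs (k,j) with k+j ≤ n and n-j-k even of (n! / (j! · k! · ((n-j-k)/2)!)) · (1/2)^{(n-j-k)/2} · x^k · d^j. -/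
open Finset
open scoped Nat

/-!
Write `(x + d)^n = ∑ c_n(k, j) x^k d^j`. Multiplying on the left by `x + d` and moving `d` to the
right with `d x^k = x^k d + k x^(k-1)` gives the recursion
`c_{n+1}(k, j) = c_n(k-1, j) + c_n(k, j-1) + (k+1) c_n(k+1, j)`.
For `n + 1 = k + j + 2m`, the closed form `n! / (j! k! m! 2^m)` makes the three terms on the right
`k`, `j` and `2m` times `n! / (j! k! m! 2^m)`, and these add up to `(n+1)! / (j! k! m! 2^m)`.
-/

-- The guard `k + j ≤ n` matters: beyond it the truncated `n - j - k` is `0`, hence even.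
noncomputable def weylCoeff (n k j : ℕ) : ℚ :=
  if k + j ≤ n ∧ Even (n - j - k) then
    (n ! : ℚ) / (j ! * k ! * ((n - j - k) / 2)!) * (1 / 2 : ℚ) ^ ((n - j - k) / 2)
  else 0

theorem weylCoeff_of_add_eq {n k j m : ℕ} (h : k + j + 2 * m = n) :
    weylCoeff n k j = (n ! : ℚ) / (j ! * k ! * m !) * (1 / 2 : ℚ) ^ m := by
  have hm : n - j - k = 2 * m := by omega
  rw [weylCoeff, if_pos ⟨by omega, hm ▸ even_two_mul m⟩, hm, Nat.mul_div_cancel_left m two_pos]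

theorem weylCoeff_eq_zero {n k j : ℕ} (h : ∀ m, k + j + 2 * m ≠ n) : weylCoeff n k j = 0 :=
  if_neg fun ⟨_, m, hm⟩ => h m (by omega)

theorem weylCoeff_succ (n k j : ℕ) :
    weylCoeff (n + 1) k j =
      (if k = 0 then 0 else weylCoeff n (k - 1) j) + (if j = 0 then 0 else weylCoeff n k (j - 1))
        + (k + 1) * weylCoeff n (k + 1) j := by
  by_cases hm : ∃ m, k + j + 2 * m = n + 1
  · obtain ⟨m, hm⟩ := hm
    rw [weylCoeff_of_add_eq hm]
    have hk : (if k = 0 then 0 else weylCoeff n (k - 1) j) =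
        k * ((n ! : ℚ) / (j ! * k ! * m !) * (1 / 2 : ℚ) ^ m) := by
      rcases k with _ | k
      · simp
      rw [if_neg k.succ_ne_zero, Nat.add_sub_cancel, weylCoeff_of_add_eq (m := m) (by omega),
        Nat.factorial_succ k]
      push_cast
      field_simp
    have hj : (if j = 0 then 0 else weylCoeff n k (j - 1)) =
        j * ((n ! : ℚ) / (j ! * k ! * m !) * (1 / 2 : ℚ) ^ m) := by
      rcases j with _ | j
      · simp
      rw [if_neg j.succ_ne_zero, Nat.add_sub_cancel, weylCoeff_of_add_eq (m := m) (by omega),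
        Nat.factorial_succ j]
      push_cast
      field_simp
    have h2m : (k + 1) * weylCoeff n (k + 1) j =
        2 * m * ((n ! : ℚ) / (j ! * k ! * m !) * (1 / 2 : ℚ) ^ m) := by
      rcases m with _ | m
      · simp [weylCoeff_eq_zero (n := n) (k := k + 1) (j := j) (by omega)]
      rw [weylCoeff_of_add_eq (m := m) (by omega), Nat.factorial_succ k, Nat.factorial_succ m]
      push_cast
      field_simp
      ring
    have hsum : (k + j + 2 * m : ℚ) = n + 1 := by exact_mod_cast hm
    rw [hk, hj, h2m, Nat.factorial_succ]
    push_cast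
    linear_combination (-((n ! : ℚ) / (j ! * k ! * m !) * (1 / 2 : ℚ) ^ m)) * hsum
  · push Not at hm
    have hk : (if k = 0 then 0 else weylCoeff n (k - 1) j) = 0 := by
      rcases k with _ | k
      · simp
      exact weylCoeff_eq_zero fun m => by have := hm m; omega
    have hj : (if j = 0 then 0 else weylCoeff n k (j - 1)) = 0 := by
      rcases j with _ | j
      · simp
      exact weylCoeff_eq_zero fun m => by have := hm m; omega
    rw [weylCoeff_eq_zero hm, hk, hj, weylCoeff_eq_zero (n := n) (k := k + 1) (j := j)
      fun m => by have := hm (m + 1); omega]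
    ring

section Commutation

variable {R : Type*} [Semiring R] {x d : R}

theorem mul_pow_succ_of_mul_eq_mul_add_one (h : d * x = x * d + 1) (k : ℕ) :
    d * x ^ (k + 1) = x ^ (k + 1) * d + (k + 1) • x ^ k := by
  induction k with
  | zero => simpa using h
  | succ k ih =>
    rw [pow_succ x (k + 1), ← mul_assoc, ih, add_mul, mul_assoc, h, mul_add, mul_one,
      ← mul_assoc, ← pow_succ, smul_mul_assoc, ← pow_succ, add_assoc, succ_nsmul _ (k + 1),
      add_comm (x ^ (k + 1))]

theorem mul_pow_mul_pow_succ_of_mul_eq_mul_add_one (h : d * x = x * d + 1) (k j : ℕ) :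
    d * (x ^ k * d ^ j) = x ^ k * d ^ (j + 1) + k • (x ^ (k - 1) * d ^ j) := by
  rcases k with _ | k
  · simp [pow_succ']
  rw [← mul_assoc, mul_pow_succ_of_mul_eq_mul_add_one h, add_mul, mul_assoc, ← pow_succ',
    Nat.add_sub_cancel, smul_mul_assoc]

end Commutation

section NormalOrderedSum

variable {R : Type*} [Semiring R] [Algebra ℚ R] (x d : R)

def normalOrderedSum (N : ℕ) (c : ℕ → ℕ → ℚ) : R :=
  ∑ k ∈ range N, ∑ j ∈ range N, c k j • (x ^ k * d ^ j)

variable {x d} {N : ℕ} {c : ℕ → ℕ → ℚ}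

theorem normalOrderedSum_add (c c' : ℕ → ℕ → ℚ) :
    normalOrderedSum x d N (fun k j => c k j + c' k j) =
      normalOrderedSum x d N c + normalOrderedSum x d N c' := by
  simp only [normalOrderedSum, add_smul, sum_add_distrib]

theorem mul_normalOrderedSum_left (hc : ∀ k j, N ≤ k + j → c k j = 0) :
    x * normalOrderedSum x d N c =
      normalOrderedSum x d (N + 1) fun k j => if k = 0 then 0 else c (k - 1) j := by
  rw [normalOrderedSum, normalOrderedSum, sum_range_succ']
  simp only [mul_sum, mul_smul_comm, ← mul_assoc, ← pow_succ', reduceIte, zero_smul,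
    sum_const_zero, add_zero, Nat.add_one_ne_zero, Nat.add_sub_cancel]
  refine sum_congr rfl fun k _ => ?_
  rw [sum_range_succ, hc k N (by omega), zero_smul, add_zero]

theorem mul_normalOrderedSum_right (h : d * x = x * d + 1) (hc : ∀ k j, N ≤ k + j → c k j = 0) :
    d * normalOrderedSum x d N c =
      normalOrderedSum x d (N + 1) fun k j =>
        (if j = 0 then 0 else c k (j - 1)) + (k + 1) * c (k + 1) j := by
  have hraise : (normalOrderedSum x d (N + 1) fun k j => if j = 0 then 0 else c k (j - 1)) =
      ∑ k ∈ range N, ∑ j ∈ range N, c k j • (x ^ k * d ^ (j + 1)) := by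
    have hrow : ∑ j ∈ range (N + 1), (if j = 0 then 0 else c N (j - 1)) • (x ^ N * d ^ j) = 0 :=
      sum_eq_zero fun j _ => by split_ifs <;> simp [hc N]
    rw [normalOrderedSum, sum_range_succ, hrow, add_zero]
    refine sum_congr rfl fun k _ => ?_
    rw [sum_range_succ']
    simp
  have hlower : ∑ k ∈ range N, ∑ j ∈ range N, (k * c k j) • (x ^ (k - 1) * d ^ j) =
      normalOrderedSum x d (N + 1) fun k j => (k + 1) * c (k + 1) j := by
    rw [← eventually_constant_sum (N := N) (n := N + 2) (fun k hk => sum_eq_zero fun j _ => by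
      simp [hc k j (by omega)]) (by omega), sum_range_succ']
    simp only [Nat.cast_zero, zero_mul, zero_smul, sum_const_zero, add_zero, Nat.cast_add,
      Nat.cast_one, Nat.add_sub_cancel, normalOrderedSum]
    refine sum_congr rfl fun k _ => ?_
    rw [sum_range_succ _ N, hc (k + 1) N (by omega), mul_zero, zero_smul, add_zero]
  rw [normalOrderedSum_add, hraise, ← hlower, normalOrderedSum]
  simp only [mul_sum, mul_smul_comm, mul_pow_mul_pow_succ_of_mul_eq_mul_add_one h, smul_add,
    sum_add_distrib, smul_smul, ← Nat.cast_smul_eq_nsmul ℚ, mul_comm]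

theorem add_mul_normalOrderedSum (h : d * x = x * d + 1) (hc : ∀ k j, N ≤ k + j → c k j = 0) :
    (x + d) * normalOrderedSum x d N c =
      normalOrderedSum x d (N + 1) fun k j =>
        (if k = 0 then 0 else c (k - 1) j) + (if j = 0 then 0 else c k (j - 1)) +
          (k + 1) * c (k + 1) j := by
  rw [add_mul, mul_normalOrderedSum_left hc, mul_normalOrderedSum_right h hc,
    ← normalOrderedSum_add]
  simp only [add_assoc]

theorem add_pow_eq_normalOrderedSum_weylCoeff (h : d * x = x * d + 1) (n : ℕ) :
    (x + d) ^ n = normalOrderedSum x d (n + 1) (weylCoeff n) := by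
  induction n with
  | zero => simp [normalOrderedSum, weylCoeff]
  | succ n ih =>
    rw [pow_succ', ih, add_mul_normalOrderedSum h
      fun k j hkj => weylCoeff_eq_zero fun m => by omega]
    exact congrArg _ (funext₂ fun k j => (weylCoeff_succ n k j).symm)

end NormalOrderedSum

theorem weyl_binomial_theorem {R : Type*} [Ring R] [Algebra ℚ R]
    (x d : R) (h : d * x = x * d + 1) (n : ℕ) :
    (x + d) ^ n =
      ∑ k ∈ Finset.range (n + 1), ∑ j ∈ Finset.range (n - k + 1),
        (if Even (n - j - k) then
          ((n.factorial : ℚ) /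
              (j.factorial * k.factorial * ((n - j - k) / 2).factorial)) *
            (1 / 2 : ℚ) ^ ((n - j - k) / 2)
        else 0) • (x ^ k * d ^ j) := by
  rw [add_pow_eq_normalOrderedSum_weylCoeff h, normalOrderedSum]
  refine sum_congr rfl fun k hk => ?_
  rw [mem_range] at hk
  rw [eventually_constant_sum (N := n - k + 1) (n := n + 1)
    (u := fun j => weylCoeff n k j • (x ^ k * d ^ j))
    (fun j hj => by rw [weylCoeff_eq_zero fun m => by omega, zero_smul]) (by omega)]
  refine sum_congr rfl fun j hj => ?_
  rw [mem_range] at hj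
  simp only [weylCoeff, show k + j ≤ n by omega, true_and]
end

section
/- Let R be an associative unital ring of prime characteristic p, and x, y ∈ R with yx = xy + 1. Then x^p commutes with y and y^p commutes with x (i.e., x^p and y^p are central in the subring generated by x and y). -/
/-! Commutation with `y` is a derivation, so the Weyl relation gives `[y, x ^ n] = n x ^ (n - 1)`;
this vanishes for `n = p` in characteristic `p`. Since `(-x) y = y (-x) + 1`, the same argument
with `y` in the role of `x` handles `y ^ p`. -/

namespace Weyl

variable {R : Type*} [Ring R] {x y : R}

theorem mul_pow_succ (h : y * x = x * y + 1) (n : ℕ) :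
    y * x ^ (n + 1) = x ^ (n + 1) * y + (n + 1 : R) * x ^ n := by
  induction n with
  | zero => simpa using h
  | succ n ih =>
    push_cast
    calc y * x ^ (n + 1 + 1) = (y * x ^ (n + 1)) * x := by rw [pow_succ _ (n + 1), mul_assoc]
      _ = x ^ (n + 1) * (y * x) + (n + 1 : R) * x ^ (n + 1) := by
        rw [ih, add_mul, mul_assoc, mul_assoc, ← pow_succ]
      _ = x ^ (n + 1 + 1) * y + (n + 1 + 1 : R) * x ^ (n + 1) := by
        rw [h, mul_add, ← mul_assoc, ← pow_succ, mul_one, add_one_mul (n + 1 : R)]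
        abel

theorem commute_pow_of_natCast_eq_zero (h : y * x = x * y + 1) {p : ℕ} (hp : (p : R) = 0) :
    Commute (x ^ p) y := by
  cases p with
  | zero => exact (pow_zero x).symm ▸ Commute.one_left y
  | succ n =>
    have hn : (n + 1 : R) = 0 := by exact_mod_cast hp
    show x ^ (n + 1) * y = y * x ^ (n + 1)
    rw [mul_pow_succ h, hn, zero_mul, add_zero]

theorem neg_mul_eq_add_one (h : y * x = x * y + 1) : -x * y = y * -x + 1 := by
  rw [neg_mul, mul_neg, h]
  abel

end Weyl

theorem weyl_char_p_central_general (p : ℕ) {R : Type*} [Ring R] [CharP R p]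
    (x y : R) (h : y * x = x * y + 1) :
    Commute (x ^ p) y ∧ Commute (y ^ p) x :=
  ⟨Weyl.commute_pow_of_natCast_eq_zero h (CharP.cast_eq_zero R p),
    Commute.neg_right_iff.mp
      (Weyl.commute_pow_of_natCast_eq_zero (Weyl.neg_mul_eq_add_one h) (CharP.cast_eq_zero R p))⟩

theorem weyl_char_p_central (p : ℕ) [Fact p.Prime] {R : Type*} [Ring R] [CharP R p]
    (x y : R) (h : y * x = x * y + 1) :
    Commute (x ^ p) y ∧ Commute (y ^ p) x :=
  weyl_char_p_central_general p x y h
end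

section
/- Let R be an associative unital ring of prime characteristic p, and x, s ∈ R with sx = xs + s. Then s^p commutes with x, and x^p - x commutes with s. -/
/-!
Conjugation by `s` shifts `x` by one, so conjugation by `s ^ m` shifts it by `m`, and `m = p`
is a shift by zero. In turn `s` conjugates `x ^ p` to `(x + 1) ^ p = x ^ p + 1` (Frobenius,
as `x` commutes with `1`), hence fixes `x ^ p - x`.
-/

namespace SemiconjBy

variable {R : Type*}

theorem pow_left_add_natCast [Semiring R] {s x : R} (h : SemiconjBy s x (x + 1)) (m : ℕ) :
    SemiconjBy (s ^ m) x (x + m) := by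
  induction m with
  | zero => simp
  | succ m ih =>
    have step : SemiconjBy s (x + m) (x + 1 + m) := h.add_right (Nat.commute_cast s m)
    rw [pow_succ', Nat.cast_succ, ← add_assoc, add_right_comm]
    exact step.mul_left ih

theorem commute_pow_char_sub_self [Ring R] (p : ℕ) [Fact p.Prime] [CharP R p] {s x : R}
    (h : SemiconjBy s x (x + 1)) : Commute s (x ^ p - x) := by
  have frobenius : (x + 1) ^ p = x ^ p + 1 := by
    rw [add_pow_char_of_commute p (Commute.one_right x), one_pow]
  have hxp : SemiconjBy s (x ^ p) (x ^ p + 1) := frobenius ▸ h.pow_right p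
  have hsub := hxp.sub_right h
  rwa [add_sub_add_right_eq_sub] at hsub

end SemiconjBy

theorem shift_char_p_central (p : ℕ) [Fact p.Prime] {R : Type*} [Ring R] [CharP R p]
    (x s : R) (h : s * x = x * s + s) :
    Commute (s ^ p) x ∧ Commute (x ^ p - x) s := by
  have shift : SemiconjBy s x (x + 1) := by rw [SemiconjBy, h, add_mul, one_mul]
  have hpow := shift.pow_left_add_natCast p
  rw [CharP.cast_eq_zero, add_zero] at hpow
  exact ⟨hpow, (shift.commute_pow_char_sub_self p).symm⟩
end
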